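/- Let {(Xᵢ,Yᵢ)}_{i=1}^n be i.i.d. with joint pmf p_{XY} on a product of finite alphabets 𝒳 × 𝒴, let ε, ε' > 0 and b₁ > b₀ > 0, and suppose ℙ[ f(Yⁿ) > ε' or f(Xⁿ,Yⁿ) > ε' ] ≤ 2^{−n b₁ ε}. Define 𝒞ⁿ ≜ { xⁿ ∈ 𝒳ⁿ : f(xⁿ) ≤ ε and ℙ[ (Xⁿ,Yⁿ) ∉ 𝒜_{ε,ε'}^{(n)}(X,Y) | Xⁿ = xⁿ ] > 2^{−n b₀ ε} }. Then ℙ[ (Xⁿ,Yⁿ) ∈ 𝒜_{ε,ε'}^{(n)}(X,Y) and Xⁿ ∈ 𝒞ⁿ ] ≤ 2^{−n (b₁ − b₀) ε}. -/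

import Mathlib

open Finset Real
open scoped Classical BigOperators

/-- Shannon entropy (in bits) of a pmf on a finite alphabet, with the convention `0 log 0 = 0`. -/
noncomputable def shannonEntropy {W : Type*} [Fintype W] (q : W → ℝ) : ℝ :=
  - ∑ w, q w * Real.logb 2 (q w)

/-- Probability of an i.i.d. sequence: `p(wⁿ) = ∏ᵢ p(wᵢ)`. -/
noncomputable def seqProb {W : Type*} (q : W → ℝ) {n : ℕ} (w : Fin n → W) : ℝ :=
  ∏ i, q (w i)

/-- The deviation `f(wⁿ) = |−(1/n) log₂ p(wⁿ) − H(W)|` of the empirical entropy. -/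
noncomputable def fdev {W : Type*} [Fintype W] (q : W → ℝ) {n : ℕ} (w : Fin n → W) : ℝ :=
  |(-(1 / (n : ℝ))) * Real.logb 2 (seqProb q w) - shannonEntropy q|

/-- Chernoff exponent `C_W^{(1)}(ε) = inf_{s>0} ( ln 𝔼[q(W)^{−s/ln 2}] − s(H(W)+ε) )`. -/
noncomputable def chernoff1 {W : Type*} [Fintype W] (q : W → ℝ) (ε : ℝ) : ℝ :=
  sInf ((fun s : ℝ =>
    Real.log (∑ w ∈ Finset.univ.filter (fun w => 0 < q w), q w ^ (1 - s / Real.log 2))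
      - s * (shannonEntropy q + ε)) '' Set.Ioi 0)

/-- Chernoff exponent `C_W^{(2)}(ε) = inf_{s>0} ( ln 𝔼[q(W)^{s/ln 2}] − s(−H(W)+ε) )`. -/
noncomputable def chernoff2 {W : Type*} [Fintype W] (q : W → ℝ) (ε : ℝ) : ℝ :=
  sInf ((fun s : ℝ =>
    Real.log (∑ w ∈ Finset.univ.filter (fun w => 0 < q w), q w ^ (1 + s / Real.log 2))
      - s * (-shannonEntropy q + ε)) '' Set.Ioi 0)

/-- Marginal on the first component of a joint pmf. -/
noncomputable def margFst {X Y : Type*} [Fintype Y] (p : X × Y → ℝ) (x : X) : ℝ :=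
  ∑ y, p (x, y)

/-- Marginal on the second component of a joint pmf. -/
noncomputable def margSnd {X Y : Type*} [Fintype X] (p : X × Y → ℝ) (y : Y) : ℝ :=
  ∑ x, p (x, y)

/-- The sequence of pairs associated to a pair of sequences. -/
def pairSeq {X Y : Type*} {n : ℕ} (w : (Fin n → X) × (Fin n → Y)) : Fin n → X × Y :=
  fun i => (w.1 i, w.2 i)

/-- Joint probability `p(xⁿ,yⁿ) = ∏ᵢ p(xᵢ,yᵢ)` of a pair of i.i.d. sequences. -/
noncomputable def jointSeqProb {X Y : Type*} (p : X × Y → ℝ) {n : ℕ}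
    (w : (Fin n → X) × (Fin n → Y)) : ℝ :=
  ∏ i, p (w.1 i, w.2 i)

/-- The typical set `𝒜_{ε,ε'}^{(n)}(X,Y)`: `f(xⁿ) ≤ ε`, `f(yⁿ) ≤ ε'`, `f(xⁿ,yⁿ) ≤ ε'`. -/
def typical {X Y : Type*} [Fintype X] [Fintype Y] (p : X × Y → ℝ)
    (ε ε' : ℝ) {n : ℕ} (w : (Fin n → X) × (Fin n → Y)) : Prop :=
  fdev (margFst p) w.1 ≤ ε ∧ fdev (margSnd p) w.2 ≤ ε' ∧ fdev p (pairSeq w) ≤ ε'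

/-- Conditional probability `ℙ[ (Xⁿ,Yⁿ) ∉ 𝒜_{ε,ε'}^{(n)}(X,Y) | Xⁿ = xⁿ ]`
(for `xⁿ` with `p(xⁿ) > 0`). -/
noncomputable def condNotTyp {X Y : Type*} [Fintype X] [Fintype Y] (p : X × Y → ℝ)
    (ε ε' : ℝ) {n : ℕ} (xn : Fin n → X) : ℝ :=
  (∑ yn ∈ Finset.univ.filter (fun yn : Fin n → Y => ¬ typical p ε ε' (xn, yn)),
      jointSeqProb p (xn, yn)) / seqProb (margFst p) xn

/-!
Write `P(xⁿ)` for the marginal probability of `xⁿ` and `A(xⁿ)` for the probability of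
`Xⁿ = xⁿ` together with `(Xⁿ,Yⁿ)` atypical, so that `ℙ[atypical | Xⁿ = xⁿ] = A(xⁿ) / P(xⁿ)`.
The event in question lies inside `{Xⁿ ∈ 𝒞ⁿ}`, whose probability is `∑_{𝒞ⁿ} P`. By Markov's
inequality for the conditional probabilities, `2^{−n b₀ ε} ∑_{𝒞ⁿ} P ≤ ∑_{𝒞ⁿ} A`; and since
`f(xⁿ) ≤ ε` on `𝒞ⁿ`, atypicality there means `f(yⁿ) > ε'` or `f(xⁿ,yⁿ) > ε'`, so
`∑_{𝒞ⁿ} A ≤ 2^{−n b₁ ε}`. Dividing gives the bound.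
-/

section

variable {X Y : Type*} {n : ℕ}

theorem jointSeqProb_nonneg {p : X × Y → ℝ} (hp : ∀ xy, 0 ≤ p xy)
    (w : (Fin n → X) × (Fin n → Y)) : 0 ≤ jointSeqProb p w :=
  prod_nonneg fun _ _ => hp _

theorem sum_jointSeqProb_eq_seqProb_margFst [Fintype Y] (p : X × Y → ℝ) (x : Fin n → X) :
    ∑ y : Fin n → Y, jointSeqProb p (x, y) = seqProb (margFst p) x :=
  (Fintype.prod_sum fun i y => p (x i, y)).symm

theorem sum_jointSeqProb_le_sum_seqProb_margFst [Fintype X] [Fintype Y] {p : X × Y → ℝ}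
    (hp : ∀ xy, 0 ≤ p xy) {Q : (Fin n → X) × (Fin n → Y) → Prop} [DecidablePred Q]
    {C : Finset (Fin n → X)} (hQ : ∀ w, Q w → w.1 ∈ C) :
    ∑ w with Q w, jointSeqProb p w ≤ ∑ x ∈ C, seqProb (margFst p) x := by
  simp only [← sum_jointSeqProb_eq_seqProb_margFst, ← sum_product]
  refine sum_le_sum_of_subset_of_nonneg (fun w hw => ?_) fun w _ _ => jointSeqProb_nonneg hp w
  exact mem_product.2 ⟨hQ w (mem_filter.1 hw).2, mem_univ _⟩

theorem not_typical_iff_of_fdev_fst_le [Fintype X] [Fintype Y] {p : X × Y → ℝ} {ε ε' : ℝ}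
    {x : Fin n → X} (hx : fdev (margFst p) x ≤ ε) (y : Fin n → Y) :
    ¬ typical p ε ε' (x, y) ↔ fdev (margSnd p) y > ε' ∨ fdev p (pairSeq (x, y)) > ε' := by
  simp only [typical, hx, true_and, not_and_or, not_le, gt_iff_lt]

theorem sum_not_typical_le_of_fdev_fst_le [Fintype X] [Fintype Y] {p : X × Y → ℝ}
    (hp : ∀ xy, 0 ≤ p xy) {ε ε' : ℝ} {C : Finset (Fin n → X)}
    (hC : ∀ x ∈ C, fdev (margFst p) x ≤ ε) :
    ∑ x ∈ C, ∑ y with ¬ typical p ε ε' (x, y), jointSeqProb p (x, y) ≤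
      ∑ w : (Fin n → X) × (Fin n → Y) with fdev (margSnd p) w.2 > ε' ∨ fdev p (pairSeq w) > ε',
        jointSeqProb p w :=
  calc ∑ x ∈ C, ∑ y with ¬ typical p ε ε' (x, y), jointSeqProb p (x, y)
      = ∑ x ∈ C, ∑ y with fdev (margSnd p) y > ε' ∨ fdev p (pairSeq (x, y)) > ε',
          jointSeqProb p (x, y) :=
        sum_congr rfl fun x hx =>
          sum_congr (filter_congr fun y _ => not_typical_iff_of_fdev_fst_le (hC x hx) y)
            fun _ _ => rfl
    _ ≤ ∑ x, ∑ y with fdev (margSnd p) y > ε' ∨ fdev p (pairSeq (x, y)) > ε',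
          jointSeqProb p (x, y) :=
        sum_le_sum_of_subset_of_nonneg (subset_univ C)
          fun x _ _ => sum_nonneg fun y _ => jointSeqProb_nonneg hp (x, y)
    _ = _ := by simp only [sum_filter, Fintype.sum_prod_type]

theorem mul_seqProb_margFst_le_of_lt_condNotTyp [Fintype X] [Fintype Y] {p : X × Y → ℝ}
    (hp : ∀ xy, 0 ≤ p xy) {ε ε' t : ℝ} {x : Fin n → X} (hx : t < condNotTyp p ε ε' x) :
    t * seqProb (margFst p) x ≤
      ∑ y with ¬ typical p ε ε' (x, y), jointSeqProb p (x, y) :=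
  mul_le_of_le_div₀ (sum_nonneg fun y _ => jointSeqProb_nonneg hp (x, y))
    (prod_nonneg fun i _ => sum_nonneg fun y _ => hp (x i, y)) hx.le

end

theorem prob_typical_bad_conditional_bound_general
    {X Y : Type*} [Fintype X] [Fintype Y] (p : X × Y → ℝ)
    (hp : ∀ xy, 0 ≤ p xy)
    (n : ℕ) (ε ε' b₀ b₁ : ℝ)
    (hhyp : ∑ w ∈ Finset.univ.filter (fun w : (Fin n → X) × (Fin n → Y) =>
          fdev (margSnd p) w.2 > ε' ∨ fdev p (pairSeq w) > ε'),
        jointSeqProb p w ≤ (2 : ℝ) ^ (-((n : ℝ) * b₁ * ε))) :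
    ∑ w ∈ Finset.univ.filter (fun w : (Fin n → X) × (Fin n → Y) =>
          typical p ε ε' w ∧
          (fdev (margFst p) w.1 ≤ ε ∧
            condNotTyp p ε ε' w.1 > (2 : ℝ) ^ (-((n : ℝ) * b₀ * ε)))),
        jointSeqProb p w
      ≤ (2 : ℝ) ^ (-((n : ℝ) * (b₁ - b₀) * ε)) := by
  set t₀ := (2 : ℝ) ^ (-((n : ℝ) * b₀ * ε))
  set C := univ.filter fun x : Fin n → X => fdev (margFst p) x ≤ ε ∧ condNotTyp p ε ε' x > t₀
  have h_markov : t₀ * ∑ x ∈ C, seqProb (margFst p) x ≤ (2 : ℝ) ^ (-((n : ℝ) * b₁ * ε)) :=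
    calc t₀ * ∑ x ∈ C, seqProb (margFst p) x
        ≤ ∑ x ∈ C, ∑ y with ¬ typical p ε ε' (x, y), jointSeqProb p (x, y) := by
          rw [mul_sum]
          exact sum_le_sum fun x hx =>
            mul_seqProb_margFst_le_of_lt_condNotTyp hp (mem_filter.1 hx).2.2
      _ ≤ _ :=
        (sum_not_typical_le_of_fdev_fst_le hp fun x hx => (mem_filter.1 hx).2.1).trans hhyp
  have h_exp : (2 : ℝ) ^ (-((n : ℝ) * (b₁ - b₀) * ε)) =
      (2 : ℝ) ^ (-((n : ℝ) * b₁ * ε)) / t₀ := by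
    rw [← rpow_sub two_pos]
    ring_nf
  rw [h_exp, le_div_iff₀' (by positivity)]
  refine (mul_le_mul_of_nonneg_left ?_ (by positivity)).trans h_markov
  exact sum_jointSeqProb_le_sum_seqProb_margFst hp fun w hw => mem_filter.2 ⟨mem_univ _, hw.2⟩

/-- With `𝒞ⁿ = { xⁿ : f(xⁿ) ≤ ε and
`ℙ[ (Xⁿ,Yⁿ) ∉ 𝒜_{ε,ε'}^{(n)} | Xⁿ = xⁿ ] > 2^{−n b₀ ε} }`, if
`ℙ[ f(Yⁿ) > ε' or f(Xⁿ,Yⁿ) > ε' ] ≤ 2^{−n b₁ ε}`, then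
`ℙ[ (Xⁿ,Yⁿ) ∈ 𝒜_{ε,ε'}^{(n)}(X,Y) and Xⁿ ∈ 𝒞ⁿ ] ≤ 2^{−n(b₁−b₀)ε}`. -/
theorem prob_typical_bad_conditional_bound
    {X Y : Type*} [Fintype X] [Fintype Y] (p : X × Y → ℝ)
    (hp : ∀ xy, 0 ≤ p xy) (hsum : ∑ xy, p xy = 1)
    (n : ℕ) (ε ε' b₀ b₁ : ℝ) (hε : 0 < ε) (hε' : 0 < ε') (hb₀ : 0 < b₀) (hb₁ : b₀ < b₁)
    (hhyp : ∑ w ∈ Finset.univ.filter (fun w : (Fin n → X) × (Fin n → Y) =>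
          fdev (margSnd p) w.2 > ε' ∨ fdev p (pairSeq w) > ε'),
        jointSeqProb p w ≤ (2 : ℝ) ^ (-((n : ℝ) * b₁ * ε))) :
    ∑ w ∈ Finset.univ.filter (fun w : (Fin n → X) × (Fin n → Y) =>
          typical p ε ε' w ∧
          (fdev (margFst p) w.1 ≤ ε ∧
            condNotTyp p ε ε' w.1 > (2 : ℝ) ^ (-((n : ℝ) * b₀ * ε)))),
        jointSeqProb p w
      ≤ (2 : ℝ) ^ (-((n : ℝ) * (b₁ - b₀) * ε)) :=
  prob_typical_bad_conditional_bound_general p hp n ε ε' b₀ b₁ hhyp
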